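/- Let T, S ∈ B_A(H). Then max{‖T+S‖_A², ‖T−S‖_A²} − ‖TT^{♯_A} + SS^{♯_A}‖_A ≤ 2ω_A(TS^{♯_A}). -/

import Mathlib

open ContinuousLinearMap

/-- The `A`-seminorm of a vector: `‖x‖_A = √⟨Ax, x⟩`. -/
noncomputable def vnormA {H : Type*} [NormedAddCommGroup H] [InnerProductSpace ℂ H]
    (A : H →L[ℂ] H) (x : H) : ℝ :=
  Real.sqrt (RCLike.re (inner ℂ (A x) x : ℂ))

/-- `T` is `A`-bounded, i.e. `T ∈ B_{A^{1/2}}(H)`. -/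
def ABounded {H : Type*} [NormedAddCommGroup H] [InnerProductSpace ℂ H]
    (A T : H →L[ℂ] H) : Prop :=
  ∃ c : ℝ, 0 < c ∧ ∀ x, vnormA A (T x) ≤ c * vnormA A x

/-- The `A`-operator seminorm `‖T‖_A = sup{‖Tx‖_A : ‖x‖_A = 1}`. -/
noncomputable def opNormA {H : Type*} [NormedAddCommGroup H] [InnerProductSpace ℂ H]
    (A T : H →L[ℂ] H) : ℝ :=
  sSup {c : ℝ | ∃ x : H, vnormA A x = 1 ∧ c = vnormA A (T x)}

/-- The `A`-numerical radius `ω_A(T) = sup{|⟨ATx, x⟩| : ‖x‖_A = 1}`. -/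
noncomputable def wA {H : Type*} [NormedAddCommGroup H] [InnerProductSpace ℂ H]
    (A T : H →L[ℂ] H) : ℝ :=
  sSup {c : ℝ | ∃ x : H, vnormA A x = 1 ∧ c = ‖(inner ℂ (A (T x)) x : ℂ)‖}

/-- `Ts` is the reduced (Douglas) solution of `AX = T*A`, i.e. `Ts = T^{♯_A}`. -/
def IsReducedAdjoint {H : Type*} [NormedAddCommGroup H] [InnerProductSpace ℂ H]
    [CompleteSpace H] (A T Ts : H →L[ℂ] H) : Prop :=
  A ∘L Ts = (ContinuousLinearMap.adjoint T) ∘L A ∧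
    ∀ y, Ts y ∈ closure (Set.range A)

/-- The `2 × 2` operator matrix `[[P, Q], [R, S]]` acting on `H ⊕ H` (with the `ℓ²` product
inner product). -/
noncomputable def blk {H : Type*} [NormedAddCommGroup H] [InnerProductSpace ℂ H]
    (P Q R S : H →L[ℂ] H) : WithLp 2 (H × H) →L[ℂ] WithLp 2 (H × H) :=
  letI e := (WithLp.prodContinuousLinearEquiv 2 ℂ H H)
  (e.symm.toContinuousLinearMap) ∘L
    ((P.comp (fst ℂ H H) + Q.comp (snd ℂ H H)).prod
      (R.comp (fst ℂ H H) + S.comp (snd ℂ H H))) ∘L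
    (e.toContinuousLinearMap)

/-- `𝔸 = diag(A, A)` on `H ⊕ H`. -/
noncomputable def AA {H : Type*} [NormedAddCommGroup H] [InnerProductSpace ℂ H]
    (A : H →L[ℂ] H) : WithLp 2 (H × H) →L[ℂ] WithLp 2 (H × H) :=
  blk A 0 0 A

/-! With `T^♯` the `A`-adjoint, `‖T + S‖_A = ‖T^♯ + S^♯‖_A`, and for `‖y‖_A = 1`
`‖(T^♯ + S^♯) y‖_A² = Re ⟨(TT^♯ + SS^♯) y, y⟩_A + 2 Re ⟨TS^♯ y, y⟩_A`,
which is at most `‖TT^♯ + SS^♯‖_A + 2 ω_A(TS^♯)`. Replacing `S` by `-S` bounds `‖T - S‖_A²`.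

The suprema defining `‖·‖_A` and `ω_A` are finite because an operator with an `A`-adjoint is
`A`-bounded. For `A`-selfadjoint `P` this is the power trick: `‖P x‖_A² ≤ ‖x‖_A ‖P² x‖_A`,
iterated along `P^(2^n)` and combined with `‖P^k x‖_A ≤ ‖A^{1/2}‖ ‖P‖^k ‖x‖`, gives
`‖P x‖_A ≤ ‖P‖ ‖x‖_A`; a general `T` is handled through `P = T^♯ T`. -/

open scoped InnerProductSpace

theorem le_mul_of_sq_le_mul_of_le_mul_pow {a : ℕ → ℝ} {C r : ℝ} (ha : ∀ k, 0 ≤ a k)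
    (hsq : ∀ k, a k ^ 2 ≤ a (2 * k) * a 0) (hC : ∀ k, a k ≤ C * r ^ k) (hr : 0 ≤ r) :
    a 1 ≤ r * a 0 := by
  by_contra! hlt
  have ha0 : 0 < a 0 := by
    refine (ha 0).lt_of_ne fun h0 => ?_
    have := hsq 1
    rw [← h0, mul_zero] at this hlt
    nlinarith
  have hr0 : 0 < r := by
    refine hr.lt_of_ne fun h0 => ?_
    have := hC 1
    rw [← h0, pow_one, mul_zero] at this
    rw [← h0, zero_mul] at hlt
    linarith
  have hdouble : ∀ n, (a 1 / a 0) ^ 2 ^ n ≤ a (2 ^ n) / a 0 := by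
    intro n
    induction n with
    | zero => simp
    | succ n ih =>
      calc (a 1 / a 0) ^ 2 ^ (n + 1) = ((a 1 / a 0) ^ 2 ^ n) ^ 2 := by rw [pow_succ, pow_mul]
        _ ≤ (a (2 ^ n) / a 0) ^ 2 := pow_le_pow_left₀ (by have := ha 1; positivity) ih 2
        _ ≤ a (2 * 2 ^ n) * a 0 / a 0 ^ 2 := by rw [div_pow]; gcongr; exact hsq _
        _ = a (2 ^ (n + 1)) / a 0 := by rw [← pow_succ']; field_simp
  have hq : 1 < a 1 / (r * a 0) := (one_lt_div (by positivity)).2 hlt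
  obtain ⟨n, hn⟩ := pow_unbounded_of_one_lt (C / a 0) hq
  have hbounded : (a 1 / (r * a 0)) ^ 2 ^ n ≤ C / a 0 := by
    calc (a 1 / (r * a 0)) ^ 2 ^ n = (a 1 / a 0) ^ 2 ^ n / r ^ 2 ^ n := by
          rw [mul_comm, ← div_div, div_pow]
      _ ≤ a (2 ^ n) / a 0 / r ^ 2 ^ n := by gcongr; exact hdouble n
      _ ≤ C * r ^ 2 ^ n / a 0 / r ^ 2 ^ n := by gcongr; exact hC _
      _ = C / a 0 := by field_simp
  linarith [pow_le_pow_right₀ hq.le (Nat.lt_two_pow_self (n := n)).le]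

section

variable {H : Type*} [NormedAddCommGroup H] [InnerProductSpace ℂ H]

def IsAAdjoint (A T Ts : H →L[ℂ] H) : Prop :=
  ∀ x y, ⟪A (T x), y⟫_ℂ = ⟪A x, Ts y⟫_ℂ

variable {A T Ts S Ss P : H →L[ℂ] H}

lemma IsAAdjoint.symm (hA : (A : H →ₗ[ℂ] H).IsSymmetric) (h : IsAAdjoint A T Ts) :
    IsAAdjoint A Ts T := fun x y => by
  have hA' : ∀ u v, ⟪A u, v⟫_ℂ = ⟪u, A v⟫_ℂ := hA
  rw [← inner_conj_symm, ← hA', ← h, hA', inner_conj_symm]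

lemma IsAAdjoint.comp (hT : IsAAdjoint A T Ts) (hS : IsAAdjoint A S Ss) :
    IsAAdjoint A (T ∘L S) (Ss ∘L Ts) := fun x y => by
  rw [comp_apply, comp_apply, hT, hS]

lemma IsAAdjoint.add (hT : IsAAdjoint A T Ts) (hS : IsAAdjoint A S Ss) :
    IsAAdjoint A (T + S) (Ts + Ss) := fun x y => by
  simp only [add_apply, map_add, inner_add_left, inner_add_right]
  rw [hT, hS]

lemma IsAAdjoint.neg (h : IsAAdjoint A T Ts) : IsAAdjoint A (-T) (-Ts) := fun x y => by
  simp only [neg_apply, map_neg, inner_neg_left, inner_neg_right]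
  rw [h]

lemma IsAAdjoint.pow (h : IsAAdjoint A P P) (k : ℕ) : IsAAdjoint A (P ^ k) (P ^ k) := by
  induction k with
  | zero => exact fun x y => rfl
  | succ k ih =>
    intro x y
    calc ⟪A ((P ^ (k + 1)) x), y⟫_ℂ = ⟪A ((P ^ k) (P x)), y⟫_ℂ := by
          rw [pow_succ, mul_apply_eq_comp]
      _ = ⟪A x, P ((P ^ k) y)⟫_ℂ := by rw [ih, h]
      _ = ⟪A x, (P ^ (k + 1)) y⟫_ℂ := by rw [pow_succ', mul_apply_eq_comp]

lemma IsReducedAdjoint.isAAdjoint [CompleteSpace H] (h : IsReducedAdjoint A T Ts) :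
    IsAAdjoint A Ts T := fun x y => by
  rw [← comp_apply A Ts, h.1, comp_apply, adjoint_inner_left]

lemma vnormA_smul (A : H →L[ℂ] H) (c : ℂ) (x : H) : vnormA A (c • x) = ‖c‖ * vnormA A x := by
  have hc : (starRingEnd ℂ) c * c = ((‖c‖ ^ 2 : ℝ) : ℂ) := by
    rw [mul_comm, Complex.mul_conj', Complex.ofReal_pow]
  rw [vnormA, vnormA, map_smul, inner_smul_left, inner_smul_right, ← mul_assoc, hc,
    RCLike.re_to_complex, Complex.re_ofReal_mul, Real.sqrt_mul (by positivity),
    Real.sqrt_sq (norm_nonneg c), RCLike.re_to_complex]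

lemma vnormA_nonneg (A : H →L[ℂ] H) (x : H) : 0 ≤ vnormA A x :=
  Real.sqrt_nonneg _

lemma vnormA_sq (hA : A.IsPositive) (x : H) : vnormA A x ^ 2 = RCLike.re ⟪A x, x⟫_ℂ :=
  Real.sq_sqrt (hA.re_inner_nonneg_left x)

lemma IsAAdjoint.vnormA_apply_sq (hA : A.IsPositive) (h : IsAAdjoint A T Ts) (x : H) :
    vnormA A (T x) ^ 2 = RCLike.re ⟪A x, Ts (T x)⟫_ℂ := by
  rw [vnormA_sq hA, h]

lemma IsAAdjoint.vnormA_add_apply_sq (hA : A.IsPositive) (hT : IsAAdjoint A T Ts)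
    (hS : IsAAdjoint A S Ss) (y : H) :
    vnormA A ((Ts + Ss) y) ^ 2 =
      RCLike.re ⟪A y, (T ∘L Ts + S ∘L Ss) y⟫_ℂ + 2 * RCLike.re ⟪A ((T ∘L Ss) y), y⟫_ℂ := by
  have hcross : ⟪A y, S (Ts y)⟫_ℂ = ⟪A ((T ∘L Ss) y), y⟫_ℂ := by
    rw [← hS.symm hA.isSymmetric, comp_apply, hT]
  have hconj : ⟪A y, (T ∘L Ss) y⟫_ℂ = (starRingEnd ℂ) ⟪A ((T ∘L Ss) y), y⟫_ℂ := by
    rw [← inner_conj_symm, hA.inner_left_eq_inner_right]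
  have hexpand : (T + S) ((Ts + Ss) y) = (T ∘L Ts + S ∘L Ss) y + (T ∘L Ss) y + S (Ts y) := by
    simp only [add_apply, comp_apply, map_add]
    abel
  rw [((hT.add hS).symm hA.isSymmetric).vnormA_apply_sq hA, hexpand, inner_add_right,
    inner_add_right, hcross, hconj, map_add, map_add, RCLike.conj_re]
  ring

lemma opNormA_nonneg (A T : H →L[ℂ] H) : 0 ≤ opNormA A T :=
  Real.sSup_nonneg fun _ ⟨_, _, hc⟩ => hc ▸ vnormA_nonneg A _

lemma wA_nonneg (A T : H →L[ℂ] H) : 0 ≤ wA A T :=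
  Real.sSup_nonneg fun _ ⟨_, _, hc⟩ => hc ▸ norm_nonneg _

lemma wA_neg (A T : H →L[ℂ] H) : wA A (-T) = wA A T := by
  simp only [wA, neg_apply, map_neg, inner_neg_left, norm_neg]

lemma opNormA_le {M : ℝ} (hM : 0 ≤ M) (h : ∀ x, vnormA A x = 1 → vnormA A (T x) ≤ M) :
    opNormA A T ≤ M :=
  Real.sSup_le (fun _ ⟨x, hx, hc⟩ => hc ▸ h x hx) hM

lemma sq_opNormA_le {M : ℝ} (hM : 0 ≤ M)
    (h : ∀ x, vnormA A x = 1 → vnormA A (T x) ^ 2 ≤ M) : opNormA A T ^ 2 ≤ M :=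
  (Real.le_sqrt (opNormA_nonneg A T) hM).1 <|
    opNormA_le (Real.sqrt_nonneg M) fun x hx => Real.le_sqrt_of_sq_le (h x hx)

lemma ABounded.bddAbove_opNormA_set (hT : ABounded A T) :
    BddAbove {c : ℝ | ∃ x : H, vnormA A x = 1 ∧ c = vnormA A (T x)} := by
  obtain ⟨c, -, hc⟩ := hT
  exact ⟨c, fun _ ⟨x, hx, h⟩ => h ▸ (hc x).trans_eq (by rw [hx, mul_one])⟩

lemma ABounded.vnormA_apply_le (hT : ABounded A T) (x : H) :
    vnormA A (T x) ≤ opNormA A T * vnormA A x := by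
  rcases (vnormA_nonneg A x).eq_or_lt with hx | hx
  · obtain ⟨c, -, hc⟩ := hT
    have := hc x
    rwa [← hx, mul_zero] at this ⊢
  · set t := vnormA A x
    have hunit : vnormA A ((t⁻¹ : ℂ) • x) = 1 := by
      rw [vnormA_smul, norm_inv, Complex.norm_real, Real.norm_of_nonneg hx.le,
        inv_mul_cancel₀ hx.ne']
    have hle := le_csSup hT.bddAbove_opNormA_set ⟨_, hunit, rfl⟩
    rw [map_smul, vnormA_smul, norm_inv, Complex.norm_real, Real.norm_of_nonneg hx.le,
      inv_mul_le_iff₀ hx] at hle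
    exact hle.trans_eq (mul_comm _ _)

end

section

variable {H : Type*} [NormedAddCommGroup H] [InnerProductSpace ℂ H] [CompleteSpace H]
  {A T Ts S Ss P : H →L[ℂ] H}

lemma inner_apply_eq_inner_sqrt (hA : A.IsPositive) (x y : H) :
    ⟪A x, y⟫_ℂ = ⟪CFC.sqrt A x, CFC.sqrt A y⟫_ℂ := by
  have hsq : CFC.sqrt A (CFC.sqrt A x) = A x :=
    congr($(CFC.sqrt_mul_sqrt_self A ((nonneg_iff_isPositive A).2 hA)) x)
  rw [← hsq]
  exact (CFC.sqrt_nonneg A).isSelfAdjoint.isSymmetric _ _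

lemma vnormA_eq_norm_sqrt (hA : A.IsPositive) (x : H) : vnormA A x = ‖CFC.sqrt A x‖ := by
  rw [vnormA, inner_apply_eq_inner_sqrt hA, inner_self_eq_norm_sq, Real.sqrt_sq (norm_nonneg _)]

lemma norm_inner_apply_le (hA : A.IsPositive) (x y : H) :
    ‖⟪A x, y⟫_ℂ‖ ≤ vnormA A x * vnormA A y := by
  rw [inner_apply_eq_inner_sqrt hA, vnormA_eq_norm_sqrt hA, vnormA_eq_norm_sqrt hA]
  exact norm_inner_le_norm _ _

lemma re_inner_apply_le (hA : A.IsPositive) (x y : H) :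
    RCLike.re ⟪A x, y⟫_ℂ ≤ vnormA A x * vnormA A y :=
  (RCLike.re_le_norm _).trans (norm_inner_apply_le hA x y)

lemma IsAAdjoint.vnormA_apply_le_of_self (hA : A.IsPositive) (hP : IsAAdjoint A P P) (x : H) :
    vnormA A (P x) ≤ ‖P‖ * vnormA A x := by
  have hpow : ∀ k, ‖(P ^ k) x‖ ≤ ‖P‖ ^ k * ‖x‖ := by
    intro k
    induction k with
    | zero => simp
    | succ k ih =>
      rw [pow_succ', mul_apply_eq_comp, pow_succ', mul_assoc]
      exact (P.le_opNorm _).trans (by gcongr)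
  refine le_mul_of_sq_le_mul_of_le_mul_pow (a := fun k => vnormA A ((P ^ k) x))
    (C := ‖CFC.sqrt A‖ * ‖x‖) (fun k => vnormA_nonneg A _) (fun k => ?_) (fun k => ?_)
    (norm_nonneg P)
  · calc vnormA A ((P ^ k) x) ^ 2 = RCLike.re ⟪A x, (P ^ k) ((P ^ k) x)⟫_ℂ :=
          (hP.pow k).vnormA_apply_sq hA x
      _ ≤ vnormA A x * vnormA A ((P ^ (2 * k)) x) := by
          rw [two_mul, pow_add, mul_apply_eq_comp]; exact re_inner_apply_le hA _ _
      _ = vnormA A ((P ^ (2 * k)) x) * vnormA A ((P ^ 0) x) := by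
          rw [pow_zero, one_apply_eq_self, mul_comm]
  · calc vnormA A ((P ^ k) x) ≤ ‖CFC.sqrt A‖ * ‖(P ^ k) x‖ := by
          rw [vnormA_eq_norm_sqrt hA]; exact (CFC.sqrt A).le_opNorm _
      _ ≤ ‖CFC.sqrt A‖ * ‖x‖ * ‖P‖ ^ k := by
          rw [mul_assoc, mul_comm ‖x‖]; gcongr; exact hpow k

lemma IsAAdjoint.vnormA_apply_le (hA : A.IsPositive) (h : IsAAdjoint A T Ts) (x : H) :
    vnormA A (T x) ≤ √‖Ts ∘L T‖ * vnormA A x := by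
  have hsq : vnormA A (T x) ^ 2 ≤ (√‖Ts ∘L T‖ * vnormA A x) ^ 2 := by
    rw [mul_pow, Real.sq_sqrt (norm_nonneg _), h.vnormA_apply_sq hA, sq]
    calc RCLike.re ⟪A x, (Ts ∘L T) x⟫_ℂ ≤ vnormA A x * vnormA A ((Ts ∘L T) x) :=
          re_inner_apply_le hA _ _
      _ ≤ vnormA A x * (‖Ts ∘L T‖ * vnormA A x) := by
          gcongr
          · exact vnormA_nonneg A x
          · exact ((h.symm hA.isSymmetric).comp h).vnormA_apply_le_of_self hA x
      _ = ‖Ts ∘L T‖ * (vnormA A x * vnormA A x) := by ring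
  exact le_of_pow_le_pow_left₀ two_ne_zero
    (mul_nonneg (Real.sqrt_nonneg _) (vnormA_nonneg A x)) hsq

lemma IsAAdjoint.aBounded (hA : A.IsPositive) (h : IsAAdjoint A T Ts) : ABounded A T :=
  ⟨√‖Ts ∘L T‖ + 1, by positivity, fun x => (h.vnormA_apply_le hA x).trans <| by
    gcongr
    · exact vnormA_nonneg A x
    · linarith⟩

lemma ABounded.norm_inner_le_wA (hA : A.IsPositive) (hT : ABounded A T) {x : H}
    (hx : vnormA A x = 1) : ‖⟪A (T x), x⟫_ℂ‖ ≤ wA A T := by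
  obtain ⟨c, -, hc⟩ := hT
  refine le_csSup ⟨c, fun _ ⟨y, hy, h⟩ => h ▸ ?_⟩ ⟨x, hx, rfl⟩
  calc ‖⟪A (T y), y⟫_ℂ‖ ≤ vnormA A (T y) * vnormA A y := norm_inner_apply_le hA _ _
    _ ≤ c * vnormA A y * vnormA A y := mul_le_mul_of_nonneg_right (hc y) (vnormA_nonneg A y)
    _ = c := by rw [hy, mul_one, mul_one]

lemma ABounded.re_inner_le_opNormA (hA : A.IsPositive) (hT : ABounded A T) {x : H}
    (hx : vnormA A x = 1) : RCLike.re ⟪A x, T x⟫_ℂ ≤ opNormA A T := by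
  calc RCLike.re ⟪A x, T x⟫_ℂ ≤ vnormA A x * vnormA A (T x) := re_inner_apply_le hA _ _
    _ ≤ opNormA A T := by
        rw [hx, one_mul]; exact (hT.vnormA_apply_le x).trans_eq (by rw [hx, mul_one])

lemma IsAAdjoint.opNormA_le (hA : A.IsPositive) (h : IsAAdjoint A T Ts) :
    opNormA A T ≤ opNormA A Ts := by
  refine _root_.opNormA_le (opNormA_nonneg A Ts) fun x hx => ?_
  have hsq : vnormA A (T x) ^ 2 ≤ opNormA A Ts * vnormA A (T x) := by
    calc vnormA A (T x) ^ 2 = RCLike.re ⟪A x, Ts (T x)⟫_ℂ := h.vnormA_apply_sq hA x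
      _ ≤ vnormA A x * vnormA A (Ts (T x)) := re_inner_apply_le hA _ _
      _ ≤ opNormA A Ts * vnormA A (T x) := by
          rw [hx, one_mul]; exact ((h.symm hA.isSymmetric).aBounded hA).vnormA_apply_le _
  nlinarith [vnormA_nonneg A (T x), opNormA_nonneg A Ts]

lemma IsAAdjoint.opNormA_eq (hA : A.IsPositive) (h : IsAAdjoint A T Ts) :
    opNormA A T = opNormA A Ts :=
  (h.opNormA_le hA).antisymm ((h.symm hA.isSymmetric).opNormA_le hA)

lemma IsAAdjoint.sq_opNormA_add_le (hA : A.IsPositive) (hT : IsAAdjoint A T Ts)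
    (hS : IsAAdjoint A S Ss) :
    opNormA A (T + S) ^ 2 ≤ opNormA A (T ∘L Ts + S ∘L Ss) + 2 * wA A (T ∘L Ss) := by
  have hsum : ABounded A (T ∘L Ts + S ∘L Ss) :=
    ((hT.comp (hT.symm hA.isSymmetric)).add (hS.comp (hS.symm hA.isSymmetric))).aBounded hA
  have hcross : ABounded A (T ∘L Ss) := (hT.comp (hS.symm hA.isSymmetric)).aBounded hA
  rw [(hT.add hS).opNormA_eq hA]
  refine sq_opNormA_le (add_nonneg (opNormA_nonneg _ _) (mul_nonneg zero_le_two (wA_nonneg _ _)))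
    fun y hy => ?_
  rw [hT.vnormA_add_apply_sq hA hS]
  gcongr
  · exact hsum.re_inner_le_opNormA hA hy
  · exact (RCLike.re_le_norm _).trans (hcross.norm_inner_le_wA hA hy)

end

theorem stmt13 {H : Type*} [NormedAddCommGroup H] [InnerProductSpace ℂ H] [CompleteSpace H]
    (A : H →L[ℂ] H) (hA : A.IsPositive)
    (T S Ts Ss : H →L[ℂ] H)
    (hT : IsReducedAdjoint A T Ts) (hS : IsReducedAdjoint A S Ss) :
    max ((opNormA A (T + S)) ^ 2) ((opNormA A (T - S)) ^ 2) -
        opNormA A (T ∘L Ts + S ∘L Ss) ≤ 2 * wA A (T ∘L Ss) := by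
  have hT' := hT.isAAdjoint.symm hA.isSymmetric
  have hS' := hS.isAAdjoint.symm hA.isSymmetric
  have hplus := hT'.sq_opNormA_add_le hA hS'
  have hminus := hT'.sq_opNormA_add_le hA hS'.neg
  rw [← sub_eq_add_neg, neg_comp, comp_neg, neg_neg, comp_neg, wA_neg] at hminus
  rw [sub_le_iff_le_add, max_le_iff]
  constructor <;> linarith
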